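/- Let n ≥ 2, let ζ = Σ_{j=1}^n ζ_j dx^j be a constant complex-valued 1-form on ℝⁿ, let l ∈ {0,…,n}, and let u be a C² l-form on an open subset of ℝⁿ. Writing e_ζ(x) = e^{ζ·x} with ζ·x = Σ_j ζ_j x^j, the following identity holds pointwise: e_{−ζ}(dδ+δd)(e_ζ u) = (dδ+δd)u + (−1)^l d(ζ∨u) + ζ∧δu + δ(ζ∧u) + (−1)^{l+1} ζ∨du − ⟨ζ,ζ⟩u. -/

import Mathlib

/-!
Conjugation by `e_ζ` shifts every partial derivative, `e_{-ζ} ∂_j (e_ζ u) = ∂_j u + ζ_j u`, hence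
`e_{-ζ} d e_ζ = d + ζ∧` and `e_{-ζ} δ e_ζ = δ - altSign (ζ∨·)`. Expanding `dδ + δd` for the
conjugated operators gives `(dδ + δd)u`, the four mixed first-order terms, and the zeroth-order
term `-(ζ ∧ altSign (ζ∨u) + altSign (ζ∨(ζ∧u)))`. The latter equals `-⟨ζ,ζ⟩u` by the anticommutation
of exterior and interior multiplication by `ζ`: in the component of a monomial `dx^S` the terms
with `k = m` contribute `ζ_k²`, and those with `k ∈ S`, `m ∉ S` cancel in pairs. On `l`-forms
`altSign` only produces the signs `(-1)^l` and `(-1)^(l+1)`.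
-/

noncomputable section

open MeasureTheory Finset

namespace EMPaper

/-- Points of `ℝⁿ`. -/
abbrev Pt (n : ℕ) := Fin n → ℝ

/-- A graded element of the complexified exterior algebra `Λ ℝⁿ ⊗ ℂ`, encoded by its
coefficients on the basis monomials `dx^{α₁} ∧ ⋯ ∧ dx^{α_l}`, indexed by the set
`{α₁ < ⋯ < α_l} ⊆ Fin n`. -/
abbrev GF (n : ℕ) := Finset (Fin n) → ℂ

/-- A graded differential form on `ℝⁿ`. -/
abbrev Form (n : ℕ) := Pt n → GF n

variable {n : ℕ}

/-- The sign `(-1)^{#{(i,j) ∈ I × J : j < i}}` obtained when merging the increasing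
enumerations of the disjoint sets `I` and `J`. -/
def msgn (I J : Finset (Fin n)) : ℂ :=
  (-1 : ℂ) ^ (((I ×ˢ J).filter fun p => p.2 < p.1).card)

/-- The wedge (exterior) product. -/
def wedge (u v : GF n) : GF n := fun S =>
  ∑ I ∈ S.powerset, msgn I (S \ I) * u I * v (S \ I)

/-- The vee product, determined by `⟨w, v ∨ u⟩ = ⟨w ∧ v, u⟩`. -/
def vee (v u : GF n) : GF n := fun I =>
  ∑ J ∈ (univ \ I).powerset, msgn I J * v J * u (I ∪ J)

/-- The ℂ-bilinear (non-Hermitian) inner product for which the basis monomials are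
orthonormal. -/
def ginner (u v : GF n) : ℂ := ∑ S : Finset (Fin n), u S * v S

/-- Componentwise complex conjugation. -/
def gconj (u : GF n) : GF n := fun S => (starRingEnd ℂ) (u S)

/-- Projection onto the degree-`l` part. -/
def proj (l : ℕ) (u : GF n) : GF n := fun S => if S.card = l then u S else 0

/-- `u` is homogeneous of degree `l` (an element of `Λ^l`). -/
def IsGrade (l : ℕ) (u : GF n) : Prop := ∀ S : Finset (Fin n), S.card ≠ l → u S = 0

/-- The basis one-form `dx^j`. -/
def dxe (j : Fin n) : GF n := fun S => if S = {j} then 1 else 0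

/-- The one-form with components `c j`. -/
def oneG (c : Fin n → ℂ) : GF n := fun S => ∑ j, if S = {j} then c j else 0

/-- `Σ_l (-1)^l u^l`. -/
def altSign (u : GF n) : GF n := fun S => (-1 : ℂ) ^ S.card * u S

/-- Exterior derivative `du = Σ_j dx^j ∧ ∂_j u`, expressed in terms of the family of
partial derivatives `D j = ∂_j u` at a point. -/
def gd (D : Fin n → GF n) : GF n := fun S => ∑ j, wedge (dxe j) (D j) S

/-- Coderivative `δu = (-1)^l Σ_j dx^j ∨ ∂_j u` (degreewise on graded forms), expressed
in terms of the family of partial derivatives `D j = ∂_j u` at a point. -/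
def gdel (D : Fin n → GF n) : GF n := fun S =>
  (-1 : ℂ) ^ (S.card + 1) * ∑ j, vee (dxe j) (D j) S

/-- Classical partial derivative `∂_{x^j}` of a complex-valued function. -/
def pd (j : Fin n) (f : Pt n → ℂ) : Pt n → ℂ := fun x => fderiv ℝ f x (Pi.single j 1)

/-- Componentwise classical partial derivatives of a graded form. -/
def Dcl (φ : Form n) : Fin n → Form n := fun j x S => pd j (fun y => φ y S) x

/-- A test function: smooth and compactly supported. -/
def IsTest (φ : Pt n → ℂ) : Prop := ContDiff ℝ (⊤ : ℕ∞) φ ∧ HasCompactSupport φ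

/-- A graded form all of whose components are test functions. -/
def TestForm (φ : Form n) : Prop := ∀ S : Finset (Fin n), IsTest fun x => φ x S

/-- `f ∈ L²_loc(ℝⁿ)`. -/
def L2loc (f : Pt n → ℂ) : Prop :=
  AEStronglyMeasurable f (volume : Measure (Pt n)) ∧
    ∀ K : Set (Pt n), IsCompact K → IntegrableOn (fun x => ‖f x‖ ^ 2) K volume

/-- `g` is the weak `j`-th partial derivative of `f` on `ℝⁿ`. -/
def HasWeakPD (j : Fin n) (f g : Pt n → ℂ) : Prop :=
  ∀ φ : Pt n → ℂ, IsTest φ → ∫ x, g x * φ x = -∫ x, f x * pd j φ x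

/-- All components of the graded form `w` belong to `H¹_loc(ℝⁿ)`, with weak partial
derivatives given componentwise by the family `Dw`. -/
def H1locWith (w : Form n) (Dw : Fin n → Form n) : Prop :=
  (∀ S : Finset (Fin n), L2loc fun x => w x S) ∧
    (∀ (j : Fin n) (S : Finset (Fin n)),
      HasWeakPD j (fun x => w x S) fun x => Dw j x S) ∧
    ∀ (j : Fin n) (S : Finset (Fin n)), L2loc fun x => Dw j x S

/-- The classical exterior derivative of a form, computed componentwise. -/
def dCl (F : Form n) : Form n := fun x => gd fun j => Dcl F j x

/-- The classical coderivative of a form, computed componentwise. -/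
def delCl (F : Form n) : Form n := fun x => gdel fun j => Dcl F j x

/-- The Hodge Laplacian `(dδ + δd)F`. -/
def hodgeLap (F : Form n) : Form n := fun x => dCl (delCl F) x + delCl (dCl F) x

lemma wedge_add_left (u u' v : GF n) : wedge (u + u') v = wedge u v + wedge u' v := by
  funext S
  simp only [wedge, Pi.add_apply, mul_add, add_mul, sum_add_distrib]

lemma wedge_add_right (u v v' : GF n) : wedge u (v + v') = wedge u v + wedge u v' := by
  funext S
  simp only [wedge, Pi.add_apply, mul_add, sum_add_distrib]

lemma wedge_smul_left (c : ℂ) (u v : GF n) : wedge (c • u) v = c • wedge u v := by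
  funext S
  simp only [wedge, Pi.smul_apply, smul_eq_mul, mul_sum]
  exact sum_congr rfl fun _ _ => by ring

lemma wedge_smul_right (c : ℂ) (u v : GF n) : wedge u (c • v) = c • wedge u v := by
  funext S
  simp only [wedge, Pi.smul_apply, smul_eq_mul, mul_sum]
  exact sum_congr rfl fun _ _ => by ring

lemma vee_add_left (v v' u : GF n) : vee (v + v') u = vee v u + vee v' u := by
  funext I
  simp only [vee, Pi.add_apply, mul_add, add_mul, sum_add_distrib]

lemma vee_add_right (v u u' : GF n) : vee v (u + u') = vee v u + vee v u' := by
  funext I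
  simp only [vee, Pi.add_apply, mul_add, sum_add_distrib]

lemma vee_smul_left (c : ℂ) (v u : GF n) : vee (c • v) u = c • vee v u := by
  funext I
  simp only [vee, Pi.smul_apply, smul_eq_mul, mul_sum]
  exact sum_congr rfl fun _ _ => by ring

lemma vee_smul_right (c : ℂ) (v u : GF n) : vee v (c • u) = c • vee v u := by
  funext I
  simp only [vee, Pi.smul_apply, smul_eq_mul, mul_sum]
  exact sum_congr rfl fun _ _ => by ring

def wedgeₗ : GF n →ₗ[ℂ] GF n →ₗ[ℂ] GF n :=
  LinearMap.mk₂ ℂ wedge wedge_add_left wedge_smul_left wedge_add_right wedge_smul_right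

def veeₗ : GF n →ₗ[ℂ] GF n →ₗ[ℂ] GF n :=
  LinearMap.mk₂ ℂ vee vee_add_left vee_smul_left vee_add_right vee_smul_right

lemma wedge_neg_right (u v : GF n) : wedge u (-v) = -wedge u v := map_neg (wedgeₗ u) v

lemma altSign_add (u v : GF n) : altSign (u + v) = altSign u + altSign v := by
  funext S
  simp only [altSign, Pi.add_apply, mul_add]

lemma altSign_smul (c : ℂ) (u : GF n) : altSign (c • u) = c • altSign u := by
  funext S
  simp only [altSign, Pi.smul_apply, smul_eq_mul]
  ring

def altSignₗ : GF n →ₗ[ℂ] GF n where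
  toFun := altSign
  map_add' := altSign_add
  map_smul' := altSign_smul

lemma oneG_eq_sum (c : Fin n → ℂ) : oneG c = ∑ j, c j • dxe j := by
  funext S
  simp only [oneG, dxe, Finset.sum_apply, Pi.smul_apply, smul_eq_mul, mul_ite, mul_one, mul_zero]

lemma wedge_oneG_eq_sum (c : Fin n → ℂ) (v : GF n) :
    wedge (oneG c) v = ∑ j, c j • wedge (dxe j) v := by
  rw [oneG_eq_sum]
  change wedgeₗ.flip v (∑ j, c j • dxe j) = ∑ j, c j • wedgeₗ.flip v (dxe j)
  simp only [map_sum, map_smul]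

lemma vee_oneG_eq_sum (c : Fin n → ℂ) (u : GF n) :
    vee (oneG c) u = ∑ j, c j • vee (dxe j) u := by
  rw [oneG_eq_sum]
  change veeₗ.flip u (∑ j, c j • dxe j) = ∑ j, c j • veeₗ.flip u (dxe j)
  simp only [map_sum, map_smul]

lemma wedge_dxe_apply (k : Fin n) (v : GF n) (S : Finset (Fin n)) :
    wedge (dxe k) v S = if k ∈ S then msgn {k} (S.erase k) * v (S.erase k) else 0 := by
  have hterm : ∀ I, msgn I (S \ I) * dxe k I * v (S \ I)
      = if I = {k} then msgn {k} (S \ {k}) * v (S \ {k}) else 0 := fun I => by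
    unfold dxe
    split_ifs with h
    · subst h; ring
    · ring
  simp only [wedge, hterm, sum_ite_eq', mem_powerset, singleton_subset_iff,
    sdiff_singleton_eq_erase]

lemma vee_dxe_apply (k : Fin n) (u : GF n) (I : Finset (Fin n)) :
    vee (dxe k) u I = if k ∈ I then 0 else msgn I {k} * u (insert k I) := by
  have hterm : ∀ J, msgn I J * dxe k J * u (I ∪ J)
      = if J = {k} then msgn I {k} * u (insert k I) else 0 := fun J => by
    unfold dxe
    split_ifs with h
    · subst h; rw [union_comm, ← insert_eq]; ring
    · ring
  by_cases hk : k ∈ I <;> simp [vee, hterm, hk]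

lemma wedge_oneG_apply (c : Fin n → ℂ) (v : GF n) (S : Finset (Fin n)) :
    wedge (oneG c) v S = ∑ k ∈ S, msgn {k} (S.erase k) * c k * v (S.erase k) := by
  simp only [wedge_oneG_eq_sum, Finset.sum_apply, Pi.smul_apply, smul_eq_mul, wedge_dxe_apply,
    mul_ite, mul_zero, sum_ite_mem, univ_inter]
  exact sum_congr rfl fun k _ => by ring

lemma vee_oneG_apply (c : Fin n → ℂ) (u : GF n) (I : Finset (Fin n)) :
    vee (oneG c) u I = ∑ k ∈ Iᶜ, msgn I {k} * c k * u (insert k I) := by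
  simp only [vee_oneG_eq_sum, Finset.sum_apply, Pi.smul_apply, smul_eq_mul, vee_dxe_apply,
    mul_ite, mul_zero, sum_ite, sum_const_zero, zero_add]
  rw [show univ.filter (· ∉ I) = Iᶜ by ext; simp]
  exact sum_congr rfl fun k _ => by ring

lemma gd_add (D E : Fin n → GF n) : gd (D + E) = gd D + gd E := by
  funext S
  simp only [gd, Pi.add_apply, wedge_add_right, sum_add_distrib]

lemma gd_smul (b : ℂ) (D : Fin n → GF n) : gd (b • D) = b • gd D := by
  funext S
  simp only [gd, Pi.smul_apply, wedge_smul_right, smul_eq_mul, mul_sum]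

lemma gd_smul_const (c : Fin n → ℂ) (w : GF n) : gd (fun j => c j • w) = wedge (oneG c) w := by
  funext S
  simp only [gd, wedge_smul_right, wedge_oneG_eq_sum, Finset.sum_apply, Pi.smul_apply]

lemma gdel_add (D E : Fin n → GF n) : gdel (D + E) = gdel D + gdel E := by
  funext S
  simp only [gdel, Pi.add_apply, vee_add_right, sum_add_distrib, mul_add]

lemma gdel_smul (b : ℂ) (D : Fin n → GF n) : gdel (b • D) = b • gdel D := by
  funext S
  simp only [gdel, Pi.smul_apply, vee_smul_right, smul_eq_mul, ← mul_sum]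
  ring

lemma gdel_smul_const (c : Fin n → ℂ) (w : GF n) :
    gdel (fun j => c j • w) = -altSign (vee (oneG c) w) := by
  funext S
  simp only [gdel, altSign, vee_smul_right, vee_oneG_eq_sum, Finset.sum_apply, Pi.smul_apply,
    Pi.neg_apply]
  ring

def gdₗ : (Fin n → GF n) →ₗ[ℂ] GF n where
  toFun := gd
  map_add' := gd_add
  map_smul' := gd_smul

def gdelₗ : (Fin n → GF n) →ₗ[ℂ] GF n where
  toFun := gdel
  map_add' := gdel_add
  map_smul' := gdel_smul

lemma isGrade_dxe (j : Fin n) : IsGrade 1 (dxe j) := fun S hS => by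
  rw [dxe, if_neg]
  rintro rfl
  exact hS (card_singleton j)

lemma IsGrade.wedge {a b : ℕ} {u v : GF n} (hu : IsGrade a u) (hv : IsGrade b v) :
    IsGrade (a + b) (wedge u v) := fun S hS => by
  refine sum_eq_zero fun I hI => ?_
  by_cases ha : I.card = a
  · have hb : (S \ I).card ≠ b := by
      rw [card_sdiff_of_subset (mem_powerset.mp hI)]
      have := card_le_card (mem_powerset.mp hI)
      omega
    rw [hv _ hb, mul_zero]
  · rw [hu _ ha, mul_zero, zero_mul]

lemma isGrade_gd {l : ℕ} {D : Fin n → GF n} (h : ∀ j, IsGrade l (D j)) :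
    IsGrade (l + 1) (gd D) := fun S hS =>
  sum_eq_zero fun j _ => ((isGrade_dxe j).wedge (h j)) S (by omega)

lemma altSign_vee_oneG_of_isGrade {l : ℕ} {w : GF n} (h : IsGrade l w) (c : Fin n → ℂ) :
    altSign (vee (oneG c) w) = (-1 : ℂ) ^ (l + 1) • vee (oneG c) w := by
  funext S
  simp only [altSign, Pi.smul_apply, smul_eq_mul]
  by_cases hS : S.card + 1 = l
  · rw [← hS]; ring
  · have hvee : vee (oneG c) w S = 0 := by
      rw [vee_oneG_apply]
      refine sum_eq_zero fun k hk => ?_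
      rw [h _ (by rwa [card_insert_of_notMem (by simpa using hk)]), mul_zero]
    rw [hvee, mul_zero, mul_zero]

lemma msgn_singleton_left (k : Fin n) (T : Finset (Fin n)) :
    msgn {k} T = (-1 : ℂ) ^ (T.filter (· < k)).card := by
  rw [msgn, singleton_product, filter_map, card_map]
  rfl

lemma msgn_singleton_right (I : Finset (Fin n)) (k : Fin n) :
    msgn I {k} = (-1 : ℂ) ^ (I.filter (k < ·)).card := by
  rw [msgn, product_singleton, filter_map, card_map]
  rfl

lemma msgn_singleton_mul_msgn_singleton {T : Finset (Fin n)} {k : Fin n} (hk : k ∉ T) :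
    msgn {k} T * msgn T {k} = (-1 : ℂ) ^ T.card := by
  have hsplit : (T.filter (· < k)).card + (T.filter (k < ·)).card = T.card := by
    rw [← card_filter_add_card_filter_not (s := T) (· < k)]
    congr 2
    refine filter_congr fun t ht => ?_
    have : t ≠ k := fun h => hk (h ▸ ht)
    simp only [not_lt, le_iff_lt_or_eq, this.symm, or_false]
  rw [msgn_singleton_left, msgn_singleton_right, ← pow_add, hsplit]

lemma msgn_erase_mul_msgn_insert {S : Finset (Fin n)} {k m : Fin n} (hk : k ∈ S) (hm : m ∉ S) :
    msgn {k} (S.erase k) * msgn (S.erase k) {m}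
      = msgn S {m} * msgn {k} (insert m (S.erase k)) := by
  have hkT : k ∉ S.erase k := notMem_erase k S
  have hmT : m ∉ S.erase k := fun h => hm (mem_of_mem_erase h)
  rw [msgn_singleton_left, msgn_singleton_right, msgn_singleton_right, msgn_singleton_left]
  nth_rewrite 3 [← insert_erase hk]
  rw [filter_insert, filter_insert]
  by_cases h : m < k
  · rw [if_pos h, if_pos h, card_insert_of_notMem (fun hc => hkT (mem_filter.mp hc).1),
      card_insert_of_notMem (fun hc => hmT (mem_filter.mp hc).1)]
    ring
  · rw [if_neg h, if_neg h]
    ring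

lemma wedge_oneG_altSign_vee_oneG_apply (c : Fin n → ℂ) (w : GF n) (S : Finset (Fin n)) :
    wedge (oneG c) (altSign (vee (oneG c) w)) S
      = ∑ k ∈ S, c k ^ 2 * w S
        + ∑ k ∈ S, ∑ m ∈ Sᶜ, (-1 : ℂ) ^ (S.erase k).card
            * (msgn {k} (S.erase k) * msgn (S.erase k) {m}) * c k * c m
            * w (insert m (S.erase k)) := by
  rw [wedge_oneG_apply, ← sum_add_distrib]
  refine sum_congr rfl fun k hk => ?_
  have hdiag := msgn_singleton_mul_msgn_singleton (notMem_erase k S)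
  have hsq : ((-1 : ℂ) ^ (S.erase k).card) ^ 2 = 1 := by
    rw [← pow_mul, mul_comm, pow_mul, neg_one_sq, one_pow]
  rw [altSign, vee_oneG_apply, compl_erase, sum_insert (by simp [hk]), insert_erase hk]
  simp only [mul_add, mul_sum]
  congr 1
  · linear_combination (c k ^ 2 * w S * (-1 : ℂ) ^ (S.erase k).card) * hdiag
      + c k ^ 2 * w S * hsq
  · exact sum_congr rfl fun m _ => by ring

lemma altSign_vee_oneG_wedge_oneG_apply (c : Fin n → ℂ) (w : GF n) (S : Finset (Fin n)) :
    altSign (vee (oneG c) (wedge (oneG c) w)) S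
      = ∑ m ∈ Sᶜ, c m ^ 2 * w S
        + ∑ k ∈ S, ∑ m ∈ Sᶜ, (-1 : ℂ) ^ S.card
            * (msgn S {m} * msgn {k} (insert m (S.erase k))) * c k * c m
            * w (insert m (S.erase k)) := by
  rw [sum_comm, altSign, vee_oneG_apply, mul_sum, ← sum_add_distrib]
  refine sum_congr rfl fun m hm => ?_
  have hm' : m ∉ S := by simpa using hm
  have hdiag := msgn_singleton_mul_msgn_singleton hm'
  have hsq : ((-1 : ℂ) ^ S.card) ^ 2 = 1 := by
    rw [← pow_mul, mul_comm, pow_mul, neg_one_sq, one_pow]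
  rw [wedge_oneG_apply, sum_insert hm', erase_insert hm']
  simp only [mul_add, mul_sum]
  congr 1
  · linear_combination (c m ^ 2 * w S * (-1 : ℂ) ^ S.card) * hdiag + c m ^ 2 * w S * hsq
  · refine sum_congr rfl fun k hk => ?_
    rw [erase_insert_of_ne (by rintro rfl; exact hm' hk)]
    ring

theorem wedge_altSign_vee_add_altSign_vee_wedge (c : Fin n → ℂ) (w : GF n) :
    wedge (oneG c) (altSign (vee (oneG c) w)) + altSign (vee (oneG c) (wedge (oneG c) w))
      = (∑ j, c j ^ 2) • w := by
  funext S
  rw [Pi.add_apply, wedge_oneG_altSign_vee_oneG_apply, altSign_vee_oneG_wedge_oneG_apply,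
    Pi.smul_apply, smul_eq_mul, ← sum_add_sum_compl S, add_mul, sum_mul, sum_mul]
  rw [add_add_add_comm, ← sum_add_distrib, add_eq_left]
  refine sum_eq_zero fun k hk => ?_
  rw [← sum_add_distrib]
  refine sum_eq_zero fun m hm => ?_
  rw [msgn_erase_mul_msgn_insert hk (by simpa using hm), ← card_erase_add_one hk, pow_succ]
  ring

lemma differentiableAt_linearMap_comp {E V W : Type*} [NormedAddCommGroup E] [NormedSpace ℝ E]
    [NormedAddCommGroup V] [NormedSpace ℂ V] [FiniteDimensional ℂ V]
    [NormedAddCommGroup W] [NormedSpace ℂ W] (L : V →ₗ[ℂ] W) {f : E → V} {x : E}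
    (hf : DifferentiableAt ℝ f x) : DifferentiableAt ℝ (fun y => L (f y)) x :=
  ((LinearMap.toContinuousLinearMap L).restrictScalars ℝ).differentiableAt.comp x hf

def expDot (ζ : Fin n → ℂ) : Pt n → ℂ := fun y => Complex.exp (∑ j, ζ j * (y j : ℂ))

def dotCLM (ζ : Fin n → ℂ) : Pt n →L[ℝ] ℂ :=
  ∑ k, ζ k • (Complex.ofRealCLM.comp (ContinuousLinearMap.proj k))

lemma dotCLM_apply (ζ : Fin n → ℂ) (v : Pt n) : dotCLM ζ v = ∑ k, ζ k * (v k : ℂ) := by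
  simp [dotCLM]

lemma dotCLM_single (ζ : Fin n → ℂ) (j : Fin n) : dotCLM ζ (Pi.single j 1) = ζ j := by
  simp only [dotCLM_apply, Pi.single_apply, apply_ite Complex.ofReal, Complex.ofReal_one,
    Complex.ofReal_zero, mul_ite, mul_one, mul_zero, sum_ite_eq', mem_univ, if_true]

lemma hasFDerivAt_expDot (ζ : Fin n → ℂ) (x : Pt n) :
    HasFDerivAt (expDot ζ) (expDot ζ x • dotCLM ζ) x := by
  have hlin : (fun y : Pt n => ∑ k, ζ k * (y k : ℂ)) = dotCLM ζ :=
    funext fun y => (dotCLM_apply ζ y).symm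
  exact (hlin ▸ (dotCLM ζ).hasFDerivAt).cexp

open Filter Topology

variable {F H : Form n} {x : Pt n}

lemma dcl_eq_fderiv (hF : DifferentiableAt ℝ F x) (j : Fin n) :
    Dcl F j x = fderiv ℝ F x (Pi.single j 1) := by
  funext S
  simp [Dcl, pd, (hasFDerivAt_pi'.1 hF.hasFDerivAt S).fderiv]

lemma dcl_congr (h : F =ᶠ[𝓝 x] H) (j : Fin n) : Dcl F j x = Dcl H j x := by
  funext S
  have hS : (fun y => F y S) =ᶠ[𝓝 x] fun y => H y S := h.fun_comp (· S)
  simp only [Dcl, pd, hS.fderiv_eq]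

lemma dcl_add (hF : DifferentiableAt ℝ F x) (hH : DifferentiableAt ℝ H x) (j : Fin n) :
    Dcl (fun y => F y + H y) j x = Dcl F j x + Dcl H j x := by
  rw [dcl_eq_fderiv (hF.fun_add hH), dcl_eq_fderiv hF, dcl_eq_fderiv hH, fderiv_fun_add hF hH]
  rfl

lemma dcl_const_smul (hF : DifferentiableAt ℝ F x) (b : ℂ) (j : Fin n) :
    Dcl (fun y => b • F y) j x = b • Dcl F j x := by
  rw [dcl_eq_fderiv (hF.fun_const_smul b), dcl_eq_fderiv hF, fderiv_fun_const_smul hF]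
  rfl

lemma dcl_expDot_smul (hF : DifferentiableAt ℝ F x) (ζ : Fin n → ℂ) (j : Fin n) :
    Dcl (fun y => expDot ζ y • F y) j x = expDot ζ x • (ζ j • F x + Dcl F j x) := by
  have h : HasFDerivAt (fun y => expDot ζ y • F y) _ x :=
    (hasFDerivAt_expDot ζ x).smul hF.hasFDerivAt
  rw [dcl_eq_fderiv h.differentiableAt, h.fderiv, dcl_eq_fderiv hF]
  simp only [add_apply, smul_apply, ContinuousLinearMap.smulRight_apply, dotCLM_single,
    smul_eq_mul]
  module

lemma isGrade_dcl {l : ℕ} (h : ∀ y, IsGrade l (F y)) (j : Fin n) (x : Pt n) :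
    IsGrade l (Dcl F j x) := fun S hS => by
  simp only [Dcl, pd, fun y => h y S hS, fderiv_const_apply, zero_apply]

lemma isGrade_dCl {l : ℕ} (h : ∀ y, IsGrade l (F y)) (x : Pt n) : IsGrade (l + 1) (dCl F x) :=
  isGrade_gd fun j => isGrade_dcl h j x

lemma differentiableAt_dcl (hF : ContDiffAt ℝ 2 F x) :
    DifferentiableAt ℝ (fun y j => Dcl F j y) x := by
  have hfd : DifferentiableAt ℝ (fderiv ℝ F) x :=
    (hF.fderiv_right (m := 1) (by norm_num)).differentiableAt one_ne_zero
  refine DifferentiableAt.congr_of_eventuallyEq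
    (differentiableAt_pi.2 fun j => hfd.clm_apply (differentiableAt_const (Pi.single j 1))) ?_
  filter_upwards [hF.eventually (by simp)] with y hy
  exact funext fun j => dcl_eq_fderiv (hy.differentiableAt two_ne_zero) j

lemma differentiableAt_dCl (hF : ContDiffAt ℝ 2 F x) : DifferentiableAt ℝ (dCl F) x :=
  differentiableAt_linearMap_comp gdₗ (differentiableAt_dcl hF)

lemma differentiableAt_delCl (hF : ContDiffAt ℝ 2 F x) : DifferentiableAt ℝ (delCl F) x :=
  differentiableAt_linearMap_comp gdelₗ (differentiableAt_dcl hF)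

lemma dCl_congr (h : F =ᶠ[𝓝 x] H) : dCl F x = dCl H x := by
  simp only [dCl, dcl_congr h]

lemma delCl_congr (h : F =ᶠ[𝓝 x] H) : delCl F x = delCl H x := by
  simp only [delCl, dcl_congr h]

lemma dCl_add (hF : DifferentiableAt ℝ F x) (hH : DifferentiableAt ℝ H x) :
    dCl (fun y => F y + H y) x = dCl F x + dCl H x := by
  simp only [dCl, dcl_add hF hH]
  exact gd_add (fun j => Dcl F j x) (fun j => Dcl H j x)

lemma delCl_add (hF : DifferentiableAt ℝ F x) (hH : DifferentiableAt ℝ H x) :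
    delCl (fun y => F y + H y) x = delCl F x + delCl H x := by
  simp only [delCl, dcl_add hF hH]
  exact gdel_add (fun j => Dcl F j x) (fun j => Dcl H j x)

lemma dCl_const_smul (hF : DifferentiableAt ℝ F x) (b : ℂ) :
    dCl (fun y => b • F y) x = b • dCl F x := by
  simp only [dCl, dcl_const_smul hF]
  exact gd_smul b (fun j => Dcl F j x)

lemma dCl_expDot_smul (hF : DifferentiableAt ℝ F x) (ζ : Fin n → ℂ) :
    dCl (fun y => expDot ζ y • F y) x = expDot ζ x • (wedge (oneG ζ) (F x) + dCl F x) := by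
  simp only [dCl, dcl_expDot_smul hF]
  rw [← gd_smul_const, ← gd_add, ← gd_smul]
  rfl

lemma delCl_expDot_smul (hF : DifferentiableAt ℝ F x) (ζ : Fin n → ℂ) :
    delCl (fun y => expDot ζ y • F y) x
      = expDot ζ x • (-altSign (vee (oneG ζ) (F x)) + delCl F x) := by
  simp only [delCl, dcl_expDot_smul hF]
  rw [← gdel_smul_const, ← gdel_add, ← gdel_smul]
  rfl

theorem hodgeLap_expDot_smul (hF : ContDiffAt ℝ 2 F x) (ζ : Fin n → ℂ) :
    hodgeLap (fun y => expDot ζ y • F y) x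
      = expDot ζ x • (hodgeLap F x + dCl (fun y => -altSign (vee (oneG ζ) (F y))) x
          + wedge (oneG ζ) (delCl F x) + delCl (fun y => wedge (oneG ζ) (F y)) x
          - altSign (vee (oneG ζ) (dCl F x)) - (∑ j, ζ j ^ 2) • F x) := by
  have hFy : ∀ᶠ y in 𝓝 x, DifferentiableAt ℝ F y :=
    (hF.eventually (by simp)).mono fun y hy => hy.differentiableAt two_ne_zero
  have hwedge : DifferentiableAt ℝ (fun y => wedge (oneG ζ) (F y)) x :=
    differentiableAt_linearMap_comp (wedgeₗ (oneG ζ)) hFy.self_of_nhds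
  have hvee : DifferentiableAt ℝ (fun y => -altSign (vee (oneG ζ) (F y))) x :=
    differentiableAt_linearMap_comp (-(altSignₗ ∘ₗ veeₗ (oneG ζ))) hFy.self_of_nhds
  have hd : dCl (fun y => expDot ζ y • F y) =ᶠ[𝓝 x]
      fun y => expDot ζ y • (wedge (oneG ζ) (F y) + dCl F y) :=
    hFy.mono fun y hy => dCl_expDot_smul hy ζ
  have hδ : delCl (fun y => expDot ζ y • F y) =ᶠ[𝓝 x]
      fun y => expDot ζ y • (-altSign (vee (oneG ζ) (F y)) + delCl F y) :=
    hFy.mono fun y hy => delCl_expDot_smul hy ζ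
  simp only [hodgeLap]
  rw [dCl_congr hδ, delCl_congr hd,
    dCl_expDot_smul (hvee.fun_add (differentiableAt_delCl hF)) ζ,
    delCl_expDot_smul (hwedge.fun_add (differentiableAt_dCl hF)) ζ,
    dCl_add hvee (differentiableAt_delCl hF), delCl_add hwedge (differentiableAt_dCl hF),
    wedge_add_right, wedge_neg_right, vee_add_right, altSign_add]
  linear_combination (norm := module)
    (-expDot ζ x) • wedge_altSign_vee_add_altSign_vee_wedge ζ (F x)

theorem statement8_general (G : Set (Pt n)) (hG : IsOpen G) (ζ : Fin n → ℂ)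
    (l : ℕ) (u : Form n)
    (hu : ∀ S : Finset (Fin n), ContDiffOn ℝ 2 (fun x => u x S) G)
    (hugr : ∀ x, IsGrade l (u x)) :
    ∀ x ∈ G,
      Complex.exp (-(∑ j, ζ j * (x j : ℂ))) •
          hodgeLap (fun y => Complex.exp (∑ j, ζ j * (y j : ℂ)) • u y) x
        = hodgeLap u x
          + (-1 : ℂ) ^ l • dCl (fun y => vee (oneG ζ) (u y)) x
          + wedge (oneG ζ) (delCl u x)
          + delCl (fun y => wedge (oneG ζ) (u y)) x
          + (-1 : ℂ) ^ (l + 1) • vee (oneG ζ) (dCl u x)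
          - (∑ j, ζ j ^ 2) • u x := by
  intro x hx
  have hu2 : ContDiffAt ℝ 2 u x := (contDiffOn_pi.2 hu).contDiffAt (hG.mem_nhds hx)
  have hsign : ∀ y, -altSign (vee (oneG ζ) (u y)) = (-1 : ℂ) ^ l • vee (oneG ζ) (u y) :=
    fun y => by rw [altSign_vee_oneG_of_isGrade (hugr y), pow_succ, mul_neg_one, neg_smul, neg_neg]
  have hexp : Complex.exp (-(∑ j, ζ j * (x j : ℂ))) * expDot ζ x = 1 := by
    rw [expDot, ← Complex.exp_add, neg_add_cancel, Complex.exp_zero]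
  have hvee : DifferentiableAt ℝ (fun y => vee (oneG ζ) (u y)) x :=
    differentiableAt_linearMap_comp (veeₗ (oneG ζ)) (hu2.differentiableAt two_ne_zero)
  change _ • hodgeLap (fun y => expDot ζ y • u y) x = _
  rw [hodgeLap_expDot_smul hu2, smul_smul, hexp, one_smul, funext hsign,
    dCl_const_smul hvee,
    altSign_vee_oneG_of_isGrade (isGrade_dCl hugr x), pow_succ _ (l + 1),
    mul_neg_one, neg_smul, sub_neg_eq_add]

/-- identity (A.7).  For a constant complex 1-form `ζ` and a `C²`
`l`-form `u` on an open set `G ⊆ ℝⁿ`, pointwise on `G`: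
`e_{−ζ}(dδ+δd)(e_ζ u) = (dδ+δd)u + (−1)^l d(ζ∨u) + ζ∧δu + δ(ζ∧u) + (−1)^{l+1} ζ∨du − ⟨ζ,ζ⟩u`. -/
theorem statement8 (hn : 2 ≤ n) (G : Set (Pt n)) (hG : IsOpen G) (ζ : Fin n → ℂ)
    (l : ℕ) (hl : l ≤ n) (u : Form n)
    (hu : ∀ S : Finset (Fin n), ContDiffOn ℝ 2 (fun x => u x S) G)
    (hugr : ∀ x, IsGrade l (u x)) :
    ∀ x ∈ G,
      Complex.exp (-(∑ j, ζ j * (x j : ℂ))) •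
          hodgeLap (fun y => Complex.exp (∑ j, ζ j * (y j : ℂ)) • u y) x
        = hodgeLap u x
          + (-1 : ℂ) ^ l • dCl (fun y => vee (oneG ζ) (u y)) x
          + wedge (oneG ζ) (delCl u x)
          + delCl (fun y => wedge (oneG ζ) (u y)) x
          + (-1 : ℂ) ^ (l + 1) • vee (oneG ζ) (dCl u x)
          - (∑ j, ζ j ^ 2) • u x :=
  statement8_general G hG ζ l u hu hugr

end EMPaper
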